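/- Let p be an odd prime and m, n ≥ 0 integers. Then: (i) if p divides m, N(m,n) = Σ_{a=0}^{⌊n/2⌋} N(m/p − a, n − 2a); (ii) if m ≡ 1 (mod p), N(m,n) = Σ_{a=0}^{⌊n/2⌋} N((m−1)/p − a, n − 2a − 1); (iii) if m is congruent to neither 0 nor 1 modulo p, then N(m,n) = 0. (Here terms with negative first argument are 0 by convention.) -/

import Mathlib

/-- The set `S_r(m,n)` of solutions of the linear system, encoded as pairs of
finitely supported sequences `(a, b) : (ℕ → ℕ) × (ℕ → ℕ)` where index `i`
(for `0 ≤ i < r`) corresponds to `a_{i+1}`, `b_{i+1}`. -/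
def SolSet (p r m n : ℕ) : Set ((ℕ → ℕ) × (ℕ → ℕ)) :=
  {ab | (∀ i, r ≤ i → ab.1 i = 0) ∧ (∀ i, r ≤ i → ab.2 i = 0) ∧
        (∀ i, ab.2 i ≤ 1) ∧
        2 * (∑ i ∈ Finset.range r, ab.1 i) + ∑ i ∈ Finset.range r, ab.2 i = n ∧
        ab.2 0 + ∑ i ∈ Finset.range r, (ab.1 i + ab.2 (i + 1)) * p ^ (i + 1) = m}

/-- `N_r(m,n)`, the number of solutions of the linear system. -/
noncomputable def Ncard (p r m n : ℕ) : ℕ := Nat.card (SolSet p r m n)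

/-- The stable value `N(m,n)` (for `p ≥ 2` one has `p ^ (m+1) > m`, so `r = m + 1`
is in the stable range), with the convention that it vanishes for negative arguments. -/
noncomputable def Nstab (p : ℕ) (m n : ℤ) : ℕ :=
  if 0 ≤ m ∧ 0 ≤ n then Ncard p (m.toNat + 1) m.toNat n.toNat else 0


/-!
In the weighted sum defining `m` every term except `b₁` is divisible by `p`, and `b₁ ≤ 1 < p`,
so `b₁ = m mod p`; in particular there are no solutions unless `m mod p ∈ {0, 1}`. Fixing
`a₁ = a` and dropping the first coordinates of `a` and `b` is a bijection onto the solutions for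
`((m - b₁)/p - a, n - 2a - b₁)` with one slot fewer, and the number of slots is irrelevant once
`p ^ r > m` because all coordinates of higher weight must vanish.
-/

namespace SolSet

variable {p r s m n : ℕ} {x : (ℕ → ℕ) × (ℕ → ℕ)}

lemma fst_le_sum (hx : x ∈ SolSet p r m n) (i : ℕ) :
    x.1 i ≤ ∑ j ∈ Finset.range r, x.1 j := by
  by_cases hi : i < r
  · exact Finset.single_le_sum (fun j _ => Nat.zero_le _) (Finset.mem_range.2 hi)
  · simp [hx.1 i (not_lt.1 hi)]

lemma summand_le (hx : x ∈ SolSet p r m n) {i : ℕ} (hi : i < r) :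
    (x.1 i + x.2 (i + 1)) * p ^ (i + 1) ≤ m := by
  rw [← hx.2.2.2.2]
  exact le_add_left (Finset.single_le_sum (f := fun i => (x.1 i + x.2 (i + 1)) * p ^ (i + 1))
    (fun j _ => Nat.zero_le _) (Finset.mem_range.2 hi))

lemma snd_zero_eq_mod (hp : 2 ≤ p) (hx : x ∈ SolSet p r m n) : x.2 0 = m % p := by
  obtain ⟨t, ht⟩ : p ∣ ∑ i ∈ Finset.range r, (x.1 i + x.2 (i + 1)) * p ^ (i + 1) :=
    Finset.dvd_sum fun i _ => Dvd.dvd.mul_left (dvd_pow_self p i.succ_ne_zero) _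
  have hb : x.2 0 < p := (hx.2.2.1 0).trans_lt hp
  rw [← hx.2.2.2.2, ht, Nat.add_mul_mod_self_left, Nat.mod_eq_of_lt hb]

lemma finite (p r m n : ℕ) : (SolSet p r m n).Finite := by
  let restrict (x : (ℕ → ℕ) × (ℕ → ℕ)) : (Fin r → ℕ) × (Fin r → ℕ) :=
    (fun i => x.1 i, fun i => x.2 i)
  have hinj : Set.InjOn restrict (SolSet p r m n) := by
    intro x hx y hy hxy
    simp only [restrict, Prod.mk.injEq, funext_iff, Fin.forall_iff] at hxy
    refine Prod.ext (funext fun i => ?_) (funext fun i => ?_) <;> by_cases hi : i < r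
    · exact hxy.1 i hi
    · rw [hx.1 i (not_lt.1 hi), hy.1 i (not_lt.1 hi)]
    · exact hxy.2 i hi
    · rw [hx.2.1 i (not_lt.1 hi), hy.2.1 i (not_lt.1 hi)]
  refine Set.Finite.of_finite_image (Set.Finite.subset
    ((Set.Finite.pi' fun _ => Set.finite_Iic n).prod
      (Set.Finite.pi' fun _ => Set.finite_Iic 1)) ?_) hinj
  rintro _ ⟨x, hx, rfl⟩
  have := hx.2.2.2.1
  exact ⟨fun i => (fst_le_sum hx i).trans (by omega), fun i => hx.2.2.1 i⟩


lemma eq_zero_of_lt_pow (hp : 1 ≤ p) (hx : x ∈ SolSet p s m n) (hm : m < p ^ r) {i : ℕ}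
    (hi : r ≤ i) : x.1 i = 0 ∧ x.2 i = 0 := by
  have key : ∀ j, r ≤ j + 1 → x.1 j + x.2 (j + 1) = 0 := by
    intro j hj
    by_cases hjs : j < s
    · have hterm := summand_le hx hjs
      have hpow : p ^ r ≤ p ^ (j + 1) := Nat.pow_le_pow_right hp hj
      by_contra h
      have := Nat.le_mul_of_pos_left (p ^ (j + 1)) (Nat.pos_of_ne_zero h)
      omega
    · simp [hx.1 j (by omega), hx.2.1 (j + 1) (by omega)]
  refine ⟨by have := key i (by omega); omega, ?_⟩
  rcases i with _ | j
  · have hm0 : m = 0 := by simpa [Nat.le_zero.1 hi] using hm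
    have := hx.2.2.2.2
    omega
  · have := key j hi
    omega

lemma mem_iff_of_forall_le_eq_zero (hrs : r ≤ s) (h1 : ∀ i, r ≤ i → x.1 i = 0)
    (h2 : ∀ i, r ≤ i → x.2 i = 0) : x ∈ SolSet p s m n ↔ x ∈ SolSet p r m n := by
  have hsum : ∀ f : ℕ → ℕ, (∀ i, r ≤ i → f i = 0) →
      ∑ i ∈ Finset.range s, f i = ∑ i ∈ Finset.range r, f i := fun f hf =>
    (Finset.sum_subset (Finset.range_subset_range.2 hrs) fun i _ hi =>
      hf i (by simpa using hi)).symm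
  simp only [SolSet, Set.mem_ofPred_eq, hsum x.1 h1, hsum x.2 h2,
    hsum (fun i => (x.1 i + x.2 (i + 1)) * p ^ (i + 1))
      fun i hi => by simp [h1 i hi, h2 (i + 1) (by omega)]]
  exact ⟨fun h => ⟨h1, h2, h.2.2⟩,
    fun h => ⟨fun i hi => h1 i (by omega), fun i hi => h2 i (by omega), h.2.2⟩⟩

lemma eq_of_le_of_lt_pow (hp : 1 ≤ p) (hrs : r ≤ s) (hm : m < p ^ r) :
    SolSet p s m n = SolSet p r m n := by
  ext x
  constructor
  · intro hx
    exact (mem_iff_of_forall_le_eq_zero hrs (fun i hi => (eq_zero_of_lt_pow hp hx hm hi).1)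
      (fun i hi => (eq_zero_of_lt_pow hp hx hm hi).2)).1 hx
  · intro hx
    exact (mem_iff_of_forall_le_eq_zero hrs hx.1 hx.2.1).2 hx

end SolSet

lemma Ncard_eq_of_lt_pow {p r s m n : ℕ} (hp : 1 ≤ p) (hr : m < p ^ r) (hs : m < p ^ s) :
    Ncard p r m n = Ncard p s m n := by
  rcases le_total r s with h | h
  · rw [Ncard, Ncard, SolSet.eq_of_le_of_lt_pow hp h hr]
  · rw [Ncard, Ncard, SolSet.eq_of_le_of_lt_pow hp h hs]

lemma Nstab_natCast (p m n : ℕ) : Nstab p m n = Ncard p (m + 1) m n := by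
  simp [Nstab]

lemma Nstab_natCast_of_lt_pow {p r m n : ℕ} (hp : 2 ≤ p) (hr : m < p ^ r) :
    Nstab p m n = Ncard p r m n := by
  rw [Nstab_natCast]
  exact Ncard_eq_of_lt_pow (by omega)
    ((Nat.lt_pow_self hp).trans_le (Nat.pow_le_pow_right (by omega) m.le_succ)) hr

lemma Nstab_natCast_sub_natCast (p k a n b : ℕ) :
    Nstab p ((k : ℤ) - a) ((n : ℤ) - b) =
      if a ≤ k ∧ b ≤ n then Nstab p ((k - a : ℕ) : ℤ) ((n - b : ℕ) : ℤ) else 0 := by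
  split_ifs with h
  · rw [Nat.cast_sub h.1, Nat.cast_sub h.2]
  · rw [Nstab, if_neg (by omega)]

def seqCons (a : ℕ) (f : ℕ → ℕ) : ℕ → ℕ
  | 0 => a
  | i + 1 => f i

@[simp] lemma seqCons_zero (a : ℕ) (f : ℕ → ℕ) : seqCons a f 0 = a := rfl

@[simp] lemma seqCons_succ (a : ℕ) (f : ℕ → ℕ) (i : ℕ) : seqCons a f (i + 1) = f i := rfl

lemma seqCons_head_tail (f : ℕ → ℕ) : seqCons (f 0) (fun i => f (i + 1)) = f :=
  funext fun i => by cases i <;> rfl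

lemma forall_seqCons {P : ℕ → ℕ → Prop} {a : ℕ} {f : ℕ → ℕ} :
    (∀ i, P i (seqCons a f i)) ↔ P 0 a ∧ ∀ i, P (i + 1) (f i) :=
  ⟨fun h => ⟨h 0, fun i => h (i + 1)⟩, fun h i => by cases i; exacts [h.1, h.2 _]⟩

lemma sum_range_succ_seqCons (a : ℕ) (f : ℕ → ℕ) (r : ℕ) :
    ∑ i ∈ Finset.range (r + 1), seqCons a f i = a + ∑ i ∈ Finset.range r, f i := by
  rw [Finset.sum_range_succ', add_comm]
  rfl

lemma sum_range_succ_seqCons_mul_pow (p a : ℕ) (f g : ℕ → ℕ) (r : ℕ) :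
    ∑ i ∈ Finset.range (r + 1), (seqCons a f i + g i) * p ^ (i + 1) =
      p * (a + (g 0 + ∑ i ∈ Finset.range r, (f i + g (i + 1)) * p ^ (i + 1))) := by
  have hterm : ∀ i,
      (f i + g (i + 1)) * p ^ (i + 1 + 1) = p * ((f i + g (i + 1)) * p ^ (i + 1)) :=
    fun i => by ring
  simp only [Finset.sum_range_succ', seqCons_succ, seqCons_zero, hterm, ← Finset.mul_sum]
  ring

def consPair (a c : ℕ) (y : (ℕ → ℕ) × (ℕ → ℕ)) : (ℕ → ℕ) × (ℕ → ℕ) :=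
  (seqCons a y.1, seqCons c y.2)

lemma consPair_injective (a c : ℕ) : Function.Injective (consPair a c) := fun _ _ h =>
  Prod.ext (funext fun i => congrFun (congrArg Prod.fst h) (i + 1))
    (funext fun i => congrFun (congrArg Prod.snd h) (i + 1))

lemma consPair_mem_SolSet_succ_iff {p r k n a c : ℕ} {y : (ℕ → ℕ) × (ℕ → ℕ)} (hp : 0 < p)
    (hc : c ≤ 1) :
    consPair a c y ∈ SolSet p (r + 1) (c + p * k) n ↔
      a ≤ k ∧ 2 * a + c ≤ n ∧ y ∈ SolSet p r (k - a) (n - (2 * a + c)) := by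
  simp only [consPair, SolSet, Set.mem_ofPred_eq, sum_range_succ_seqCons,
    forall_seqCons (P := fun i v => r + 1 ≤ i → v = 0), forall_seqCons (P := fun _ v => v ≤ 1),
    seqCons_succ, sum_range_succ_seqCons_mul_pow]
  simp only [seqCons_zero, Nat.add_le_add_iff_right, nonpos_iff_eq_zero, Nat.add_one_ne_zero,
    false_implies, true_and, hc, Nat.add_left_cancel_iff, Nat.mul_left_cancel_iff hp]
  constructor
  · rintro ⟨h1, h2, h3, hn, hk⟩
    exact ⟨by omega, by omega, h1, h2, h3, by omega, by omega⟩
  · rintro ⟨hak, han, h1, h2, h3, hn, hk⟩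
    exact ⟨h1, h2, h3, by omega, by omega⟩

lemma SolSet.fiber_eq_image {p r k n a c : ℕ} (hp : 2 ≤ p) (hc : c ≤ 1) :
    {x | x ∈ SolSet p (r + 1) (c + p * k) n ∧ x.1 0 = a} =
      consPair a c ''
        {y | a ≤ k ∧ 2 * a + c ≤ n ∧ y ∈ SolSet p r (k - a) (n - (2 * a + c))} := by
  ext x
  constructor
  · rintro ⟨hx, rfl⟩
    have hc' : x.2 0 = c := by
      rw [snd_zero_eq_mod hp hx, Nat.add_mul_mod_self_left, Nat.mod_eq_of_lt (by omega)]
    have hx' : consPair (x.1 0) c (fun i => x.1 (i + 1), fun i => x.2 (i + 1)) = x := by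
      rw [← hc']
      exact Prod.ext (seqCons_head_tail _) (seqCons_head_tail _)
    refine ⟨_, ?_, hx'⟩
    rw [Set.mem_ofPred_eq, ← consPair_mem_SolSet_succ_iff (by omega) hc, hx']
    exact hx
  · rintro ⟨y, hy, rfl⟩
    exact ⟨(consPair_mem_SolSet_succ_iff (by omega) hc).2 hy, rfl⟩

lemma Ncard_succ_add_mul {p r k n c : ℕ} (hp : 2 ≤ p) (hc : c ≤ 1) :
    Ncard p (r + 1) (c + p * k) n =
      ∑ a ∈ Finset.range (n / 2 + 1),
        if a ≤ k ∧ 2 * a + c ≤ n then Ncard p r (k - a) (n - (2 * a + c)) else 0 := by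
  classical
  have hS := SolSet.finite p (r + 1) (c + p * k) n
  have hmaps : (hS.toFinset : Set ((ℕ → ℕ) × (ℕ → ℕ))).MapsTo (fun x => x.1 0)
      (Finset.range (n / 2 + 1) : Set ℕ) := by
    intro x hx
    rw [Set.Finite.coe_toFinset] at hx
    have := SolSet.fst_le_sum hx 0
    have := hx.2.2.2.1
    simp only [Finset.coe_range, Set.mem_Iio]
    omega
  rw [Ncard, Nat.card_coe_set_eq, Set.ncard_eq_toFinset_card _ hS,
    Finset.card_eq_sum_card_fiberwise hmaps]
  refine Finset.sum_congr rfl fun a _ => ?_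
  rw [← Set.ncard_coe_finset, Finset.coe_filter]
  simp only [Set.Finite.mem_toFinset]
  rw [SolSet.fiber_eq_image hp hc, Set.ncard_image_of_injective _ (consPair_injective a c)]
  split_ifs with h
  · simp only [h, true_and, Set.ofPred_mem_eq, Ncard, Nat.card_coe_set_eq]
  · convert Set.ncard_empty ((ℕ → ℕ) × (ℕ → ℕ))
    exact Set.eq_empty_of_forall_notMem fun y hy => h ⟨hy.1, hy.2.1⟩

lemma Nstab_natCast_eq_sum {p m n c : ℕ} (hp : 2 ≤ p) (hc : c ≤ 1) (hmc : m % p = c) :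
    Nstab p m n = ∑ a ∈ Finset.range (n / 2 + 1),
      Nstab p (((m : ℤ) - c) / p - a) ((n : ℤ) - 2 * a - c) := by
  obtain ⟨k, rfl⟩ : ∃ k, m = c + p * k := ⟨m / p, by rw [← hmc, Nat.mod_add_div]⟩
  have hk : (((c + p * k : ℕ) : ℤ) - c) / p = k := by
    push_cast
    rw [add_sub_cancel_left, Int.mul_ediv_cancel_left _ (by omega)]
  have hkm : k ≤ c + p * k := by nlinarith
  rw [Nstab_natCast, Ncard_succ_add_mul hp hc, hk]
  refine Finset.sum_congr rfl fun a _ => ?_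
  rw [show (n : ℤ) - 2 * a - c = n - ((2 * a + c : ℕ) : ℤ) by push_cast; ring,
    Nstab_natCast_sub_natCast]
  split_ifs
  · exact (Nstab_natCast_of_lt_pow hp
      ((k.sub_le a).trans hkm |>.trans_lt (Nat.lt_pow_self hp))).symm
  · rfl

lemma Nstab_eq_zero_of_two_le_mod {p m n : ℕ} (hp : 2 ≤ p) (hm : 2 ≤ m % p) :
    Nstab p m n = 0 := by
  have hempty : SolSet p (m + 1) m n = ∅ := Set.eq_empty_of_forall_notMem fun x hx => by
    have := SolSet.snd_zero_eq_mod hp hx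
    have := hx.2.2.1 0
    omega
  rw [Nstab_natCast, Ncard, hempty, Nat.card_of_isEmpty]

theorem stmt6_general (p : ℕ) (hp : p.Prime) (m n : ℕ) :
    ((p ∣ m → Nstab p (m : ℤ) (n : ℤ) =
        ∑ a ∈ Finset.range (n / 2 + 1), Nstab p ((m : ℤ) / p - a) ((n : ℤ) - 2 * a)) ∧
     (m % p = 1 → Nstab p (m : ℤ) (n : ℤ) =
        ∑ a ∈ Finset.range (n / 2 + 1), Nstab p (((m : ℤ) - 1) / p - a) ((n : ℤ) - 2 * a - 1)) ∧
     (m % p ≠ 0 → m % p ≠ 1 → Nstab p (m : ℤ) (n : ℤ) = 0)) := by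
  have hp2 := hp.two_le
  refine ⟨fun hdvd => ?_, fun hm => ?_, fun h0 h1 => Nstab_eq_zero_of_two_le_mod hp2 (by omega)⟩
  · simpa using Nstab_natCast_eq_sum hp2 zero_le_one (Nat.mod_eq_zero_of_dvd hdvd)
  · simpa using Nstab_natCast_eq_sum hp2 le_rfl hm

/-- the recursive formula for `N(m,n)`, an odd prime `p`. -/
theorem stmt6 (p : ℕ) (hp : p.Prime) (hodd : Odd p) (m n : ℕ) :
    ((p ∣ m → Nstab p (m : ℤ) (n : ℤ) =
        ∑ a ∈ Finset.range (n / 2 + 1), Nstab p ((m : ℤ) / p - a) ((n : ℤ) - 2 * a)) ∧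
     (m % p = 1 → Nstab p (m : ℤ) (n : ℤ) =
        ∑ a ∈ Finset.range (n / 2 + 1), Nstab p (((m : ℤ) - 1) / p - a) ((n : ℤ) - 2 * a - 1)) ∧
     (m % p ≠ 0 → m % p ≠ 1 → Nstab p (m : ℤ) (n : ℤ) = 0)) :=
  stmt6_general p hp m n
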